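/- arXiv:1807.03271 — 2 statements merged into one kernel-verified Lean document; each statement's English description precedes it below -/
import Mathlib

section
/- If G(t) is the unique formal power series with G(0)=1 satisfying G = ∏_{i=0}^{m-1} (1 - x_i t G)^{-1}, then for all n ≥ k ≥ 0, the coefficient of t^{n-k} in G(t)^{k+1} equals ((k+1)/(n+1)) · Σ_{j_0+...+j_{m-1} = n-k} ∏_{i=0}^{m-1} binom(n+j_i, j_i) x_i^{j_i}. -/
/-! With `Q(u) = ∏ i, (1 - x_i u)` and `P = Q⁻¹`, the claim is the Lagrange inversion formula
`(k + r) [t^r] G^k = k [t^r] P^(k+r)` for the solution of `G · Q(tG) = 1`, which we prove for any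
polynomial `Q` with `Q(0) = 1` by induction on `r` and then `k`. Expanding `G^k = G^(k+1) Q(tG)`
expresses `[t^r] G^k` through `[t^r] G^(k+1)` and lower coefficients of higher powers of `G`; the
matching identity on the `P` side comes from `P^M = Q P^(M+1)` and `(P^M)' = -M P^(M+1) Q'`.
Finally `P^(n+1) = ∏ i, (1 - x_i t)^(-(n+1))`, whose coefficients are products of binomials. -/

open PowerSeries Finset
open scoped Polynomial

namespace PowerSeries

variable {R : Type*} [CommRing R]

theorem coeff_mul_eq_sum_range (A F : R⟦X⟧) (r : ℕ) :
    coeff r (A * F) = ∑ j ∈ range (r + 1), coeff j A * coeff (r - j) F := by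
  rw [coeff_mul, Nat.sum_antidiagonal_eq_sum_range_succ (fun i j => coeff i A * coeff j F)]

theorem coeff_X_mul_derivative (F : R⟦X⟧) (r : ℕ) :
    coeff r (X * d⁄dX R F) = r * coeff r F := by
  cases r with
  | zero => simp
  | succ r => rw [coeff_succ_X_mul, coeff_derivative, mul_comm]; push_cast; ring

theorem derivative_pow_eq_of_mul_eq_one {Q P : R⟦X⟧} (hP : Q * P = 1) (n : ℕ) :
    d⁄dX R (P ^ n) = -(n * P ^ (n + 1) * d⁄dX R Q) := by
  rw [Derivation.leibniz_pow, (d⁄dX R).leibniz_of_mul_eq_one (mul_comm Q P ▸ hP)]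
  cases n with
  | zero => simp
  | succ n => simp only [smul_eq_mul, nsmul_eq_mul, Nat.add_sub_cancel]; ring

theorem coeff_prod_eq_sum_antidiagonalTuple {m : ℕ} (f : Fin m → R⟦X⟧) (d : ℕ) :
    coeff d (∏ i, f i) = ∑ j ∈ Nat.antidiagonalTuple m d, ∏ i, coeff (j i) (f i) := by
  rw [coeff_prod, ← piAntidiag_univ_fin_eq_antidiagonalTuple, finsuppAntidiag, sum_map]
  exact sum_attach _ (fun j : Fin m → ℕ => ∏ i, coeff (j i) (f i))

section LagrangeInversion

variable (Q : R[X])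

theorem coeff_pow_eq_sum_of_mul_aeval_eq_one {G : R⟦X⟧}
    (hG : G * Polynomial.aeval (X * G) Q = 1) (k r : ℕ) :
    coeff r (G ^ k) = ∑ j ∈ range (r + 1), Q.coeff j * coeff (r - j) (G ^ (k + 1 + j)) := by
  have hexp : G ^ k = ∑ j ∈ range (r + 1 + Q.natDegree),
      C (Q.coeff j) * (X ^ j * G ^ (k + 1 + j)) := by
    rw [← mul_one (G ^ k), ← hG,
      Polynomial.aeval_eq_sum_range' (n := r + 1 + Q.natDegree) (by omega), mul_sum, mul_sum]
    refine sum_congr rfl fun j _ => ?_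
    rw [smul_eq_C_mul]
    ring
  have htail (j : ℕ) :
      coeff r (C (Q.coeff (r + 1 + j)) * (X ^ (r + 1 + j) * G ^ (k + 1 + (r + 1 + j)))) = 0 := by
    rw [coeff_C_mul, coeff_X_pow_mul', if_neg (by omega), mul_zero]
  rw [hexp, map_sum, sum_range_add, sum_eq_zero fun j _ => htail j, add_zero]
  refine sum_congr rfl fun j hj => ?_
  rw [coeff_C_mul, coeff_X_pow_mul', if_pos (Nat.lt_succ_iff.mp (mem_range.mp hj))]

theorem natCast_mul_sum_coeff_pow_succ_of_coe_mul_eq_one {P : R⟦X⟧}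
    (hP : (Q : R⟦X⟧) * P = 1) (k r : ℕ) :
    ((k + r : ℕ) : R) * ∑ j ∈ range (r + 1),
        Q.coeff j * ((k + 1 + j : ℕ) * coeff (r - j) (P ^ (k + r + 1)))
      = k * (k + r + 1 : ℕ) * coeff r (P ^ (k + r)) := by
  have hQP : coeff r (P ^ (k + r))
      = ∑ j ∈ range (r + 1), Q.coeff j * coeff (r - j) (P ^ (k + r + 1)) := by
    rw [← one_mul (P ^ (k + r)), ← hP, mul_assoc, ← pow_succ', coeff_mul_eq_sum_range]
    simp only [Polynomial.coeff_coe]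
  have hderiv : (r : R) * coeff r (P ^ (k + r))
      = -((k + r : ℕ)
          * ∑ j ∈ range (r + 1), (j * Q.coeff j) * coeff (r - j) (P ^ (k + r + 1))) := by
    have hXd : X * d⁄dX R (P ^ (k + r))
        = -(C ((k + r : ℕ) : R) * (X * d⁄dX R (Q : R⟦X⟧) * P ^ (k + r + 1))) := by
      rw [derivative_pow_eq_of_mul_eq_one hP, map_natCast]
      ring
    rw [← coeff_X_mul_derivative, hXd, map_neg, coeff_C_mul, coeff_mul_eq_sum_range]
    simp only [coeff_X_mul_derivative, Polynomial.coeff_coe]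
  have hsplit : ∑ j ∈ range (r + 1),
        Q.coeff j * ((k + 1 + j : ℕ) * coeff (r - j) (P ^ (k + r + 1)))
      = (k + 1) * ∑ j ∈ range (r + 1), Q.coeff j * coeff (r - j) (P ^ (k + r + 1))
        + ∑ j ∈ range (r + 1), (j * Q.coeff j) * coeff (r - j) (P ^ (k + r + 1)) := by
    rw [mul_sum, ← sum_add_distrib]
    refine sum_congr rfl fun j _ => ?_
    push_cast
    ring
  rw [hsplit]
  push_cast at hderiv ⊢
  linear_combination ((k : R) + r) * (k + 1) * hQP.symm + hderiv

theorem lagrange_inversion [IsAddTorsionFree R] (hQ0 : Q.coeff 0 = 1) {G P : R⟦X⟧}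
    (hG : G * Polynomial.aeval (X * G) Q = 1) (hP : (Q : R⟦X⟧) * P = 1) (r k : ℕ) :
    ((k + r : ℕ) : R) * coeff r (G ^ k) = k * coeff r (P ^ (k + r)) := by
  induction r using Nat.strong_induction_on generalizing k with | _ r ihr
  rcases Nat.eq_zero_or_pos r with rfl | hr
  · have hG0 : constantCoeff G = 1 := by
      simpa [hQ0] using (coeff_pow_eq_sum_of_mul_aeval_eq_one Q hG 0 0).symm
    have hP0 : constantCoeff P = 1 := by
      simpa [hQ0] using congrArg constantCoeff hP
    simp [hG0, hP0]
  induction k with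
  | zero => simp [coeff_one, hr.ne']
  | succ k ihk =>
    have hG_rec := coeff_pow_eq_sum_of_mul_aeval_eq_one Q hG k r
    have hP_rec := natCast_mul_sum_coeff_pow_succ_of_coe_mul_eq_one Q hP k r
    rw [sum_range_succ'] at hG_rec hP_rec
    have htail : ((k + 1 + r : ℕ) : R) * ∑ i ∈ range r,
          Q.coeff (i + 1) * coeff (r - (i + 1)) (G ^ (k + 1 + (i + 1)))
        = ∑ i ∈ range r,
          Q.coeff (i + 1) * ((k + 1 + (i + 1) : ℕ) * coeff (r - (i + 1)) (P ^ (k + r + 1))) := by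
      rw [mul_sum]
      refine sum_congr rfl fun i hi => ?_
      replace hi := mem_range.mp hi
      have hIH := ihr (r - (i + 1)) (by omega) (k + 1 + (i + 1))
      rw [show k + 1 + (i + 1) + (r - (i + 1)) = k + 1 + r by omega] at hIH
      rw [mul_left_comm, hIH, add_right_comm k 1 r]
    apply nsmul_right_injective (M := R) (n := k + r) (by omega)
    simp only [nsmul_eq_mul, hQ0, add_right_comm k 1 r] at hG_rec hP_rec htail ihk ⊢
    push_cast at hG_rec hP_rec htail ihk ⊢
    linear_combination (-((k : R) + r) * (k + r + 1)) * hG_rec + ((k : R) + r + 1) * ihk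
      - ((k : R) + r) * htail - hP_rec

end LagrangeInversion

theorem coe_prod_one_sub_mul_prod_rescale_mk_one {m : ℕ} (a : Fin m → R) :
    ((∏ i, (1 - Polynomial.C (a i) * Polynomial.X) : R[X]) : R⟦X⟧)
      * ∏ i, rescale (a i) (mk 1) = 1 := by
  have h (i : Fin m) : (1 : R⟦X⟧) - C (a i) * X = rescale (a i) (1 - X : R⟦X⟧) := by
    simp [rescale_X]
  rw [← Polynomial.coeToPowerSeries.ringHom_apply, map_prod]
  simp only [Polynomial.coeToPowerSeries.ringHom_apply, Polynomial.coe_sub, Polynomial.coe_one,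
    Polynomial.coe_mul, Polynomial.coe_C, Polynomial.coe_X, h, ← prod_mul_distrib, ← map_mul,
    mul_comm (1 - X : R⟦X⟧), mk_one_mul_one_sub_eq_one, map_one, prod_const_one]

theorem coeff_prod_rescale_mk_one_pow {m : ℕ} (a : Fin m → R) (n r : ℕ) :
    coeff r ((∏ i, rescale (a i) (mk 1)) ^ (n + 1))
      = ∑ j ∈ Nat.antidiagonalTuple m r, ∏ i, ((n + j i).choose (j i) : R) * a i ^ j i := by
  simp only [← prod_pow, ← map_pow, mk_one_pow_eq_mk_choose_add,
    coeff_prod_eq_sum_antidiagonalTuple, coeff_rescale, coeff_mk]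
  refine sum_congr rfl fun j _ => prod_congr rfl fun i _ => ?_
  rw [Nat.choose_symm_add, mul_comm]

end PowerSeries

theorem stmt_4_general (m : ℕ)
    (G : PowerSeries (MvPolynomial (Fin m) ℚ))
    (hG : G * ∏ i : Fin m,
      (1 - PowerSeries.C (MvPolynomial.X i)
            * PowerSeries.X * G) = 1)
    (n k : ℕ) (hk : k ≤ n) :
    PowerSeries.coeff (n - k) (G ^ (k + 1))
      = MvPolynomial.C (((k : ℚ) + 1) / ((n : ℚ) + 1))
        * ∑ j ∈ Finset.Nat.antidiagonalTuple m (n - k),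
            ∏ i : Fin m,
              ((n + j i).choose (j i) : MvPolynomial (Fin m) ℚ)
                * MvPolynomial.X i ^ (j i) := by
  set Q : (MvPolynomial (Fin m) ℚ)[X] :=
    ∏ i, (1 - Polynomial.C (MvPolynomial.X i) * Polynomial.X)
  have hQ0 : Q.coeff 0 = 1 := by
    simp [Q, Polynomial.coeff_zero_eq_eval_zero, Polynomial.eval_prod]
  have hGQ : G * Polynomial.aeval (X * G) Q = 1 := by
    simpa [Q, map_prod, mul_assoc] using hG
  have key := lagrange_inversion Q hQ0 hGQ (coe_prod_one_sub_mul_prod_rescale_mk_one _)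
    (n - k) (k + 1)
  rw [show k + 1 + (n - k) = n + 1 by omega, coeff_prod_rescale_mk_one_pow] at key
  have hn : ((n : ℚ) + 1) ≠ 0 := by positivity
  calc coeff (n - k) (G ^ (k + 1))
      = MvPolynomial.C ((n : ℚ) + 1)⁻¹
          * (MvPolynomial.C ((n : ℚ) + 1) * coeff (n - k) (G ^ (k + 1))) := by
        rw [← mul_assoc, ← map_mul, inv_mul_cancel₀ hn, map_one, one_mul]
    _ = _ := by
        rw [div_eq_inv_mul, map_mul, mul_assoc]
        congr 1
        simpa using key

/-- If `G` is the formal power series with constant term `1` satisfying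
`G = ∏_{i=0}^{m-1} (1 - x_i t G)⁻¹` (equivalently `G · ∏_i (1 - x_i t G) = 1`),
then for `n ≥ k ≥ 0` the coefficient of `t^{n-k}` in `G^{k+1}` equals
`((k+1)/(n+1)) Σ_{j_0+⋯+j_{m-1} = n-k} ∏_i binom(n+j_i, j_i) x_i^{j_i}`. -/
theorem stmt_4 (m : ℕ) (hm : 1 ≤ m)
    (G : PowerSeries (MvPolynomial (Fin m) ℚ))
    (hG0 : PowerSeries.constantCoeff G = 1)
    (hG : G * ∏ i : Fin m,
      (1 - PowerSeries.C (MvPolynomial.X i)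
            * PowerSeries.X * G) = 1)
    (n k : ℕ) (hk : k ≤ n) :
    PowerSeries.coeff (n - k) (G ^ (k + 1))
      = MvPolynomial.C (((k : ℚ) + 1) / ((n : ℚ) + 1))
        * ∑ j ∈ Finset.Nat.antidiagonalTuple m (n - k),
            ∏ i : Fin m,
              ((n + j i).choose (j i) : MvPolynomial (Fin m) ℚ)
                * MvPolynomial.X i ^ (j i) :=
  stmt_4_general m G hG n k hk
end

section
/- Let P be a row-finite matrix over a commutative ring, let O(P) be its output matrix (O(P)_{nk} = (P^n)_{0k}), and let a_n = (P^n)_{00}. Then the infinite Hankel matrix H = (a_{i+j})_{i,j≥0} factorizes as H = O(P)·O(Pᵀ)ᵀ. Consequently, if P is totally positive of order r over a partially ordered commutative ring, then H is totally positive of order r. -/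
/-- A matrix is row-finite if each of its rows has finitely many nonzero entries. -/
def RowFinite {R : Type*} [Zero R] (P : ℕ → ℕ → R) : Prop :=
  ∀ i : ℕ, {j : ℕ | P i j ≠ 0}.Finite

/-- The output matrix of a production matrix `P`: `𝒪(P)_{nk} = (P^n)_{0k}`. -/
noncomputable def outputMatrix {R : Type*} [CommRing R] (P : ℕ → ℕ → R) : ℕ → ℕ → R
  | 0, k => if k = 0 then 1 else 0
  | n + 1, k => ∑ᶠ j : ℕ, outputMatrix P n j * P j k

/-- The minor of an infinite matrix `M : ℕ → ℕ → R` with rows `f 0 < f 1 < ⋯`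
and columns `g 0 < g 1 < ⋯` (for strictly monotone `f, g`). -/
noncomputable def submatrixDet {R : Type*} [CommRing R] (M : ℕ → ℕ → R) {k : ℕ}
    (f g : Fin k → ℕ) : R :=
  Matrix.det (Matrix.of fun i j => M (f i) (g j))

/-!
Row-finiteness makes every sum below finite. Moving one factor `P` at a time from the left
power to the right one gives `a_{n+n'} = (Pⁿ · Pⁿ')₀₀ = Σ_k (Pⁿ)_{0k} ((Pᵀ)ⁿ')_{0k}`.

For total positivity, the Cauchy–Binet formula writes each minor of a product as a sum of
products of minors. The first row of `𝒪(P)` is `e₀` and its row `n + 1` is row `n` of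
`𝒪(P) · P`, so induction on the order of a minor and on its first row index shows that
`𝒪(P)`, and likewise `𝒪(Pᵀ)`, is totally positive of order `r`; Cauchy–Binet applied to
`H = 𝒪(P) · 𝒪(Pᵀ)ᵀ` then finishes the proof.
-/

open Finset Function

section CauchyBinet

variable {R ι : Type*} [CommRing R] {k : ℕ}

theorem Finset.sum_injective_eq_sum_strictMono_sum_perm {M : Type*} [AddCommMonoid M]
    [LinearOrder ι] (s : Finset ι) (F : (Fin k → ι) → M) :
    ∑ r ∈ (Fintype.piFinset fun _ => s).filter Injective, F r
      = ∑ ψ ∈ (Fintype.piFinset fun _ => s).filter StrictMono,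
          ∑ σ : Equiv.Perm (Fin k), F (ψ ∘ σ) := by
  rw [← sum_product']
  refine sum_nbij' (fun r => (r ∘ Tuple.sort r, (Tuple.sort r)⁻¹))
    (fun p => p.1 ∘ p.2) ?_ ?_ ?_ ?_ ?_
  · intro r hr
    simp only [mem_filter, Fintype.mem_piFinset] at hr
    simp only [mem_product, mem_filter, Fintype.mem_piFinset, mem_univ, and_true]
    exact ⟨fun i => hr.1 _, (Tuple.monotone_sort r).strictMono_of_injective
      (hr.2.comp (Tuple.sort r).injective)⟩
  · rintro ⟨ψ, σ⟩ hp
    simp only [mem_product, mem_filter, Fintype.mem_piFinset, mem_univ, and_true] at hp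
    simp only [mem_filter, Fintype.mem_piFinset]
    exact ⟨fun i => hp.1 _, hp.2.injective.comp σ.injective⟩
  · intro r _
    ext x
    simp
  · rintro ⟨ψ, σ⟩ hp
    simp only [mem_product, mem_filter, mem_univ, and_true] at hp
    have hsort : Tuple.sort (ψ ∘ σ) = σ⁻¹ := by
      refine (Tuple.eq_sort_iff.2 ⟨fun a b hab => ?_, fun a b hab heq => ?_⟩).symm
      · simpa using hp.2.monotone hab
      · exact absurd (hp.2.injective (by simpa using heq)) hab.ne
    ext x <;> simp [hsort]
  · intro r _
    congr 1
    ext x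
    simp

namespace Matrix

theorem det_of_sum_mul_eq_sum_prod_mul_det (s : Finset ι) (A : Fin k → ι → R)
    (B : ι → Fin k → R) :
    det (of fun i j => ∑ x ∈ s, A i x * B x j)
      = ∑ r ∈ Fintype.piFinset fun _ => s, (∏ i, A i (r i)) * det (of fun i j => B (r i) j) := by
  have hrows : (of fun i j => ∑ x ∈ s, A i x * B x j) = fun i => ∑ x ∈ s, A i x • B x := by
    ext i j
    simp
  rw [hrows]
  refine (detRowAlternating.map_sum_finset (fun i x => A i x • B x) fun _ => s).trans
    (sum_congr rfl fun r _ => ?_)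
  exact detRowAlternating.toMultilinearMap.map_smul_univ (fun i => A i (r i)) fun i => B (r i)

theorem det_of_rows_eq_zero_of_not_injective (B : ι → Fin k → R) {r : Fin k → ι}
    (hr : ¬ Injective r) : det (of fun i j => B (r i) j) = 0 := by
  obtain ⟨a, b, hab, hne⟩ := not_injective_iff.1 hr
  exact det_zero_of_row_eq hne (by ext; simp [hab])

theorem sum_perm_prod_mul_det (A : Fin k → ι → R) (B : ι → Fin k → R) (ψ : Fin k → ι) :
    ∑ σ : Equiv.Perm (Fin k), (∏ i, A i (ψ (σ i))) * det (of fun i j => B (ψ (σ i)) j)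
      = det (of fun i j => A i (ψ j)) * det (of fun i j => B (ψ i) j) := by
  have hsign : ∀ σ : Equiv.Perm (Fin k),
      det (of fun i j => B (ψ (σ i)) j) = Equiv.Perm.sign σ * det (of fun i j => B (ψ i) j) :=
    fun σ => det_permute σ (of fun i j => B (ψ i) j)
  simp_rw [hsign, ← det_transpose (of fun i j => A i (ψ j)), det_apply', sum_mul]
  refine sum_congr rfl fun σ _ => ?_
  simp only [transpose_apply, of_apply]
  ring

theorem det_of_sum_mul [LinearOrder ι] (s : Finset ι) (A : Fin k → ι → R)
    (B : ι → Fin k → R) :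
    det (of fun i j => ∑ x ∈ s, A i x * B x j)
      = ∑ ψ ∈ (Fintype.piFinset fun _ => s).filter StrictMono,
          det (of fun i j => A i (ψ j)) * det (of fun i j => B (ψ i) j) := by
  have hinj : ∀ r ∈ Fintype.piFinset fun _ => s,
      (∏ i, A i (r i)) * det (of fun i j => B (r i) j) ≠ 0 → Injective r := by
    intro r _ hr
    by_contra hnot
    exact hr (by rw [det_of_rows_eq_zero_of_not_injective B hnot, mul_zero])
  rw [det_of_sum_mul_eq_sum_prod_mul_det, ← sum_filter_of_ne hinj,
    sum_injective_eq_sum_strictMono_sum_perm]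
  exact sum_congr rfl fun ψ _ => sum_perm_prod_mul_det A B ψ

theorem det_of_sum_mul_nonneg [PartialOrder R] [IsOrderedRing R] [LinearOrder ι]
    (s : Finset ι) (A : Fin k → ι → R) (B : ι → Fin k → R)
    (hA : ∀ ψ : Fin k → ι, StrictMono ψ → 0 ≤ det (of fun i j => A i (ψ j)))
    (hB : ∀ ψ : Fin k → ι, StrictMono ψ → 0 ≤ det (of fun i j => B (ψ i) j)) :
    0 ≤ det (of fun i j => ∑ x ∈ s, A i x * B x j) := by
  rw [det_of_sum_mul]
  exact sum_nonneg fun ψ hψ => mul_nonneg (hA ψ (mem_filter.1 hψ).2) (hB ψ (mem_filter.1 hψ).2)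

end Matrix

end CauchyBinet

section FiniteSums

variable {R : Type*} [NonUnitalSemiring R]

theorem finsum_mul_eq_sum_of_support_subset {α : Type*} {a b : α → R} {s : Finset α}
    (h : support a ⊆ s) : ∑ᶠ x, a x * b x = ∑ x ∈ s, a x * b x :=
  finsum_eq_sum_of_support_subset _ ((support_mul_subset_left _ _).trans h)

theorem finsum_finsum_mul_assoc {a c : ℕ → R} {B : ℕ → ℕ → R} (ha : (support a).Finite)
    (hB : RowFinite B) :
    ∑ᶠ k, (∑ᶠ j, a j * B j k) * c k = ∑ᶠ j, a j * ∑ᶠ k, B j k * c k := by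
  classical
  let t := ha.toFinset
  let u := t.biUnion fun j => (hB j).toFinset
  have ht : support a ⊆ t := by simp [t]
  have hu : ∀ j ∈ t, support (B j) ⊆ u := fun j hj k hk =>
    mem_coe.2 (mem_biUnion.2 ⟨j, hj, by simpa using hk⟩)
  have hinner : ∀ k, ∑ᶠ j, a j * B j k = ∑ j ∈ t, a j * B j k :=
    fun k => finsum_mul_eq_sum_of_support_subset ht
  have houter : support (fun k => ∑ j ∈ t, a j * B j k) ⊆ u := fun k hk => by
    obtain ⟨j, hj, hne⟩ := exists_ne_zero_of_sum_ne_zero hk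
    exact hu j hj (right_ne_zero_of_mul hne)
  calc ∑ᶠ k, (∑ᶠ j, a j * B j k) * c k = ∑ k ∈ u, (∑ j ∈ t, a j * B j k) * c k := by
        simp_rw [hinner]
        exact finsum_mul_eq_sum_of_support_subset houter
    _ = ∑ j ∈ t, a j * ∑ k ∈ u, B j k * c k := by
        simp_rw [sum_mul, mul_sum, mul_assoc]
        exact sum_comm
    _ = ∑ᶠ j, a j * ∑ᶠ k, B j k * c k := by
        rw [finsum_mul_eq_sum_of_support_subset ht]
        exact sum_congr rfl fun j hj => by rw [finsum_mul_eq_sum_of_support_subset (hu j hj)]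

end FiniteSums

section OutputMatrix

variable {R : Type*} [CommRing R] {P : ℕ → ℕ → R}

theorem rowFinite_outputMatrix (hP : RowFinite P) : RowFinite (outputMatrix P) := by
  classical
  intro n
  induction n with
  | zero =>
    refine (Set.finite_singleton 0).subset fun k hk => ?_
    by_contra h
    rw [Set.mem_singleton_iff] at h
    simp [outputMatrix, h] at hk
  | succ n ih =>
    refine (ih.toFinset.biUnion fun j => (hP j).toFinset).finite_toSet.subset fun k hk => ?_
    have hsum : outputMatrix P (n + 1) k = ∑ j ∈ ih.toFinset, outputMatrix P n j * P j k :=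
      finsum_mul_eq_sum_of_support_subset (by simp [support])
    rw [Set.mem_ofPred_eq, hsum] at hk
    obtain ⟨j, hj, hne⟩ := exists_ne_zero_of_sum_ne_zero hk
    simpa using ⟨j, left_ne_zero_of_mul hne, right_ne_zero_of_mul hne⟩

theorem outputMatrix_add_eq_finsum (hP : RowFinite P) (n n' : ℕ) :
    outputMatrix P (n + n') 0
      = ∑ᶠ k, outputMatrix P n k * outputMatrix (fun i j => P j i) n' k := by
  induction n' generalizing n with
  | zero =>
    rw [finsum_eq_single _ 0 fun k hk => by simp [outputMatrix, hk]]
    simp [outputMatrix]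
  | succ n' ih =>
    rw [← add_assoc, add_right_comm, ih (n + 1)]
    refine (finsum_finsum_mul_assoc (rowFinite_outputMatrix hP n) hP).trans
      (finsum_congr fun j => ?_)
    exact congrArg _ (finsum_congr fun k => mul_comm _ _)

theorem submatrixDet_transpose (M : ℕ → ℕ → R) {k : ℕ} (f g : Fin k → ℕ) :
    submatrixDet (fun i j => M j i) f g = submatrixDet M g f :=
  Matrix.det_transpose (Matrix.of fun i j => M (g i) (f j))

theorem submatrixDet_outputMatrix_of_head_eq_zero {k : ℕ} {f g : Fin (k + 1) → ℕ}
    (hf : f 0 = 0) (hg : StrictMono g) :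
    submatrixDet (outputMatrix P) f g
      = if g 0 = 0 then submatrixDet (outputMatrix P) (Fin.tail f) (Fin.tail g) else 0 := by
  have hrow : ∀ j, j ≠ 0 → outputMatrix P (f 0) (g j) = 0 := fun j hj => by
    have := hg (Fin.pos_of_ne_zero hj)
    simp [hf, outputMatrix, show g j ≠ 0 by omega]
  rw [submatrixDet, Matrix.det_succ_row_zero,
    Fintype.sum_eq_single 0 fun j hj => by simp [hrow j hj]]
  split_ifs with hg0 <;> simp [hf, hg0, outputMatrix, submatrixDet, Fin.tail, Matrix.submatrix]

end OutputMatrix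

section TotalPositivity

variable {R : Type*} [CommRing R] [PartialOrder R]

def TotallyPositiveOfOrder (r : ℕ) (M : ℕ → ℕ → R) : Prop :=
  ∀ k ≤ r, ∀ f g : Fin k → ℕ, StrictMono f → StrictMono g → 0 ≤ submatrixDet M f g

theorem TotallyPositiveOfOrder.transpose {r : ℕ} {M : ℕ → ℕ → R}
    (hM : TotallyPositiveOfOrder r M) : TotallyPositiveOfOrder r fun i j => M j i :=
  fun k hk f g hf hg => (submatrixDet_transpose M f g).symm ▸ hM k hk g f hg hf

variable [IsOrderedRing R] {P : ℕ → ℕ → R} {r : ℕ}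

theorem submatrixDet_nonneg_of_eq_finsum_mul {M A B : ℕ → ℕ → R} {k : ℕ} {f f' g : Fin k → ℕ}
    (hfin : ∀ i j, (support fun x => A (f' i) x * B x (g j)).Finite)
    (hM : ∀ i j, M (f i) (g j) = ∑ᶠ x, A (f' i) x * B x (g j))
    (hA : ∀ ψ, StrictMono ψ → 0 ≤ submatrixDet A f' ψ)
    (hB : ∀ ψ, StrictMono ψ → 0 ≤ submatrixDet B ψ g) :
    0 ≤ submatrixDet M f g := by
  classical
  let s := univ.biUnion fun p : Fin k × Fin k => (hfin p.1 p.2).toFinset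
  have hsum : ∀ i j, ∑ᶠ x, A (f' i) x * B x (g j) = ∑ x ∈ s, A (f' i) x * B x (g j) :=
    fun i j => finsum_eq_sum_of_support_subset _ fun x hx =>
      mem_coe.2 (mem_biUnion.2 ⟨(i, j), mem_univ _, by simpa using hx⟩)
  have hdet : submatrixDet M f g = (Matrix.of fun i j => ∑ x ∈ s, A (f' i) x * B x (g j)).det := by
    simp only [submatrixDet, hM, hsum]
  rw [hdet]
  exact Matrix.det_of_sum_mul_nonneg s _ _ hA hB

/- `hfin` replaces `RowFinite P` so that this also applies to `Pᵀ`, which need not be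
row-finite although all sums defining `𝒪(Pᵀ)` are finite when `P` is. -/
theorem totallyPositiveOfOrder_outputMatrix (hTP : TotallyPositiveOfOrder r P)
    (hfin : ∀ n k, (support fun j => outputMatrix P n j * P j k).Finite) :
    TotallyPositiveOfOrder r (outputMatrix P) := by
  intro k
  induction k with
  | zero => intro _ f g _ _; simp [submatrixDet]
  | succ k ih =>
    intro hk
    suffices ∀ m (f g : Fin (k + 1) → ℕ), f 0 = m → StrictMono f → StrictMono g →
        0 ≤ submatrixDet (outputMatrix P) f g from fun f g => this _ f g rfl
    intro m
    induction m with
    | zero =>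
      intro f g hf0 hf hg
      rw [submatrixDet_outputMatrix_of_head_eq_zero hf0 hg]
      split_ifs
      · exact ih (by omega) _ _ (hf.comp Fin.strictMono_succ) (hg.comp Fin.strictMono_succ)
      · exact le_rfl
    | succ m ihm =>
      intro f g hf0 hf hg
      have hpos : ∀ i, 1 ≤ f i := fun i => by
        have := hf.monotone (Fin.zero_le i)
        omega
      refine submatrixDet_nonneg_of_eq_finsum_mul (f' := fun i => f i - 1)
        (fun _ _ => hfin _ _) (fun i j => ?_) (fun ψ hψ => ihm _ ψ (by omega) ?_ hψ)
        (fun ψ hψ => hTP _ hk ψ g hψ hg)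
      · conv_lhs => rw [← Nat.sub_add_cancel (hpos i)]
        rfl
      · intro a b hab
        have := hf hab
        have := hpos a
        dsimp only
        omega

theorem totallyPositiveOfOrder_hankel (hTP : TotallyPositiveOfOrder r P) (hP : RowFinite P) :
    TotallyPositiveOfOrder r fun i j => outputMatrix P (i + j) 0 := by
  have hO := totallyPositiveOfOrder_outputMatrix hTP fun n _ =>
    (rowFinite_outputMatrix hP n).subset (support_mul_subset_left _ _)
  have hO' := totallyPositiveOfOrder_outputMatrix hTP.transpose fun _ k =>
    (hP k).subset (support_mul_subset_right _ _)
  intro k hk f g hf hg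
  refine submatrixDet_nonneg_of_eq_finsum_mul (f' := f)
    (B := fun x j => outputMatrix (fun i j => P j i) j x)
    (fun i _ => (rowFinite_outputMatrix hP (f i)).subset (support_mul_subset_left _ _))
    (fun i j => outputMatrix_add_eq_finsum hP (f i) (g j))
    (fun ψ hψ => hO k hk f ψ hf hψ) (fun ψ hψ => ?_)
  rw [submatrixDet_transpose]
  exact hO' k hk g ψ hg hψ

end TotalPositivity

/-- With `a_n = (P^n)_{00}`, the Hankel matrix `H = (a_{i+j})` factorizes as
`H = 𝒪(P)·𝒪(Pᵀ)ᵀ` (entrywise: `a_{n+n'} = Σ_k 𝒪(P)_{nk}·𝒪(Pᵀ)_{n'k}`).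
Consequently, if `P` is totally positive of order `r` over a partially ordered
commutative ring, then so is `H`. -/
theorem stmt_17 :
    (∀ (R : Type) [CommRing R] (P : ℕ → ℕ → R), RowFinite P →
      ∀ n n' : ℕ, outputMatrix P (n + n') 0
        = ∑ᶠ k : ℕ, outputMatrix P n k * outputMatrix (fun i j => P j i) n' k)
    ∧ (∀ (R : Type) [CommRing R] [PartialOrder R] [IsOrderedRing R] (P : ℕ → ℕ → R), RowFinite P → ∀ r : ℕ,
        (∀ k ≤ r, ∀ f g : Fin k → ℕ, StrictMono f → StrictMono g →
          0 ≤ submatrixDet P f g) →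
        ∀ k ≤ r, ∀ f g : Fin k → ℕ, StrictMono f → StrictMono g →
          0 ≤ submatrixDet (fun i j => outputMatrix P (i + j) 0) f g) :=
  ⟨fun _ _ _ hP => outputMatrix_add_eq_finsum hP,
    fun _ _ _ _ _ hP _ hTP => totallyPositiveOfOrder_hankel hTP hP⟩
end
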